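/- Let B = [[a,b,c,d],[e,f,g,h],[l,m,n,p],[q,r,s,t]] be a 4×4 complex matrix satisfying conj(B)ᵀ J B = J, where J has J₁₄ = J₄₁ = J₂₂ = J₃₃ = 1 and zeros elsewhere. If d and q are purely imaginary and a and t are real, then b = c = e = l = r = s = h = p = 0. -/
import Mathlib

private lemma sq4_aux {x y z w : ℝ} (hsum : x*x + y*y + (z*z + w*w) = 0) :
    x = 0 ∧ y = 0 ∧ z = 0 ∧ w = 0 := by
  refine ⟨?_, ?_, ?_, ?_⟩ <;>
    nlinarith [mul_self_nonneg x, mul_self_nonneg y, mul_self_nonneg z, mul_self_nonneg w]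

private lemma czero_aux {x : ℂ} (h1 : x.re = 0) (h2 : x.im = 0) : x = 0 := by
  rw [Complex.ext_iff]; simp [h1, h2]

set_option maxHeartbeats 1000000 in
theorem stmt_6 (a b c d e f g h l m n p q r s t : ℂ)
    (B : Matrix (Fin 4) (Fin 4) ℂ)
    (hBdef : B = !![a,b,c,d; e,f,g,h; l,m,n,p; q,r,s,t])
    (hB : B.conjTranspose * !![0,0,0,1; 0,1,0,0; 0,0,1,0; 1,0,0,0] * B
        = !![(0:ℂ),0,0,1; 0,1,0,0; 0,0,1,0; 1,0,0,0])
    (hd : d.re = 0) (hq : q.re = 0) (ha : a.im = 0) (ht : t.im = 0) :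
    b = 0 ∧ c = 0 ∧ e = 0 ∧ l = 0 ∧ r = 0 ∧ s = 0 ∧ h = 0 ∧ p = 0 := by
  set J : Matrix (Fin 4) (Fin 4) ℂ := !![(0:ℂ),0,0,1; 0,1,0,0; 0,0,1,0; 1,0,0,0] with hJ
  have hJJ : J * J = 1 := by
    ext i j
    fin_cases i <;> fin_cases j <;>
      simp [hJ, Matrix.mul_apply, Fin.sum_univ_four, Matrix.one_apply, Matrix.vecHead,
        Matrix.vecTail]
  have hL : (J * B.conjTranspose * J) * B = 1 := by
    calc (J * B.conjTranspose * J) * B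
        = J * (B.conjTranspose * J * B) := by rw [mul_assoc J, mul_assoc J]
      _ = J * J := by rw [hB]
      _ = 1 := hJJ
  have hR : B * (J * B.conjTranspose * J) = 1 := mul_eq_one_comm.mp hL
  have hB2 : B * J * B.conjTranspose = J := by
    calc B * J * B.conjTranspose
        = B * (J * B.conjTranspose * J) * J := by
          rw [mul_assoc, mul_assoc, mul_assoc, hJJ, mul_one]
      _ = 1 * J := by rw [hR]
      _ = J := one_mul J
  subst hBdef
  have h00 := congrFun (congrFun hB 0) 0
  have h33 := congrFun (congrFun hB 3) 3
  have g00 := congrFun (congrFun hB2 0) 0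
  have g33 := congrFun (congrFun hB2 3) 3
  clear hB hB2 hL hR hJJ
  simp [hJ, Matrix.mul_apply, Fin.sum_univ_four, Matrix.conjTranspose_apply,
    Matrix.vecHead, Matrix.vecTail] at h00 h33 g00 g33
  have h1 := congrArg Complex.re h00
  have h2 := congrArg Complex.re h33
  have h3 := congrArg Complex.re g00
  have h4 := congrArg Complex.re g33
  simp [Complex.add_re, Complex.mul_re, ha, hq, hd, ht] at h1 h2 h3 h4
  obtain ⟨he1, he2, hl1, hl2⟩ := sq4_aux h1
  obtain ⟨hh1, hh2, hp1, hp2⟩ := sq4_aux h2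
  obtain ⟨hb1, hb2, hc1, hc2⟩ := sq4_aux h3
  obtain ⟨hr1, hr2, hs1, hs2⟩ := sq4_aux h4
  exact ⟨czero_aux hb1 hb2, czero_aux hc1 hc2, czero_aux he1 he2, czero_aux hl1 hl2,
    czero_aux hr1 hr2, czero_aux hs1 hs2, czero_aux hh1 hh2, czero_aux hp1 hp2⟩
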